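/- Under the modular setup below, T ≤ A. (In CFT language: the twist gap τ_gap = 2T of a unitary modular-invariant 2D CFT with central charge c = 1 + 24A > 1 satisfies τ_gap ≤ (c−1)/12.) -/

import Mathlib

/-!
Compare `Z̃(s, c)` with `Z̃(s, 1)` for `c ≥ 1`. Since `μ` lives on `h̄ ≥ T`, the non-vacuum part
of `Z̃(s, c)` is at most `e^{-(c-1)T}` times that of `Z̃(s, 1)`. Apply modular invariance to both:
`K(s, c) / K(s, 1)` does not depend on `s`, and as `s → 0⁺` the dual temperature `4π²/s` tends to
`∞`, which projects `Z̃(4π²/s, ·)` onto its vacuum term `1 - e^{-·}`, while the vacuum term at `s`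
is negligible against `K(s, 1) ≥ 1`. The resulting inequality between vacuum terms says that
`e^{(T-A)c}` grows at most like `c²`, hence `T ≤ A`.
-/

open MeasureTheory

/-- The reduced partition function
`Z̃(β, β̄) = (1-e^{-β})(1-e^{-β̄}) + ∫ e^{-βh - β̄h̄} dμ(h,h̄)`. -/
noncomputable def Ztil (μ : Measure (ℝ × ℝ)) (β βb : ℝ) : ℝ :=
  (1 - Real.exp (-β)) * (1 - Real.exp (-βb)) +
    ∫ p : ℝ × ℝ, Real.exp (-β * p.1 - βb * p.2) ∂μ

/-- The modular crossing kernel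
`K(β, β̄) = (2π/√(ββ̄)) exp(4π²A/β + 4π²A/β̄ - Aβ - Aβ̄)`. -/
noncomputable def Kker (A β βb : ℝ) : ℝ :=
  2 * Real.pi / Real.sqrt (β * βb) *
    Real.exp (4 * Real.pi ^ 2 * A / β + 4 * Real.pi ^ 2 * A / βb - A * β - A * βb)

open Filter Topology Real

lemma one_sub_exp_neg_div_le (x : ℝ) {c : ℝ} (hc : 1 ≤ c) :
    (1 - exp (-x)) / c ≤ 1 - exp (-(x / c)) := by
  have hc₀ : 0 < c := one_pos.trans_le hc
  have hconv := convexOn_exp.2 (Set.mem_univ (-x)) (Set.mem_univ 0)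
    (inv_nonneg.2 hc₀.le) (sub_nonneg.2 (inv_le_one_of_one_le₀ hc)) (add_sub_cancel _ 1)
  simp only [smul_eq_mul, mul_zero, add_zero, exp_zero, mul_one] at hconv
  rw [div_eq_inv_mul, ← neg_div, div_eq_inv_mul]
  linarith

lemma nonpos_of_exp_mul_le_mul_sq {b C : ℝ} (h : ∀ c, 1 ≤ c → exp (b * c) ≤ C * c ^ 2) :
    b ≤ 0 := by
  by_contra! hb
  obtain ⟨c, hC, hc⟩ := (((tendsto_exp_mul_div_rpow_atTop 2 b hb).eventually_gt_atTop C).and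
    (eventually_ge_atTop 1)).exists
  rw [rpow_two, lt_div_iff₀ (by positivity)] at hC
  exact (h c hc).not_gt hC

lemma Kker_pos {A s c : ℝ} (hs : 0 < s) (hc : 0 < c) : 0 < Kker A s c := by
  have := sqrt_pos.2 (mul_pos hs hc)
  unfold Kker
  positivity

lemma one_le_Kker_one {A s : ℝ} (hA : 0 ≤ A) (hs : 0 < s) (hs₁ : s ≤ 1) : 1 ≤ Kker A s 1 := by
  unfold Kker
  rw [mul_one, div_one]
  apply one_le_mul_of_one_le_of_one_le
  · rw [one_le_div (sqrt_pos.2 hs)]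
    nlinarith [sqrt_le_one.2 hs₁, pi_gt_three]
  · refine one_le_exp ?_
    have : 0 ≤ 4 * π ^ 2 * A / s := by positivity
    nlinarith [mul_nonneg hA (show 0 ≤ 4 * π ^ 2 - s - 1 by nlinarith [pi_gt_three])]

lemma Kker_eq_mul_Kker_one (A : ℝ) {s c : ℝ} (hs : 0 < s) (hc : 0 < c) :
    Kker A s c =
      exp (4 * π ^ 2 * A / c - A * c - 4 * π ^ 2 * A + A) / √c * Kker A s 1 := by
  unfold Kker
  rw [sqrt_mul hs.le, mul_one,
    show 4 * π ^ 2 * A / s + 4 * π ^ 2 * A / c - A * s - A * c =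
      (4 * π ^ 2 * A / c - A * c - 4 * π ^ 2 * A + A) +
        (4 * π ^ 2 * A / s + 4 * π ^ 2 * A / 1 - A * s - A * 1) by ring, exp_add]
  have := sqrt_pos.2 hc
  field_simp

section GappedSpectrum

variable {μ : Measure (ℝ × ℝ)} {T : ℝ}

lemma integral_exp_le_exp_mul_integral (hsupp : ∀ᵐ p ∂μ, T ≤ p.1 ∧ T ≤ p.2)
    {β₁ β₂ βb₁ βb₂ : ℝ} (hβ : β₁ ≤ β₂) (hβb : βb₁ ≤ βb₂)
    (h₁ : Integrable (fun p : ℝ × ℝ => exp (-β₁ * p.1 - βb₁ * p.2)) μ)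
    (h₂ : Integrable (fun p : ℝ × ℝ => exp (-β₂ * p.1 - βb₂ * p.2)) μ) :
    ∫ p, exp (-β₂ * p.1 - βb₂ * p.2) ∂μ ≤
      exp (-((β₂ - β₁ + (βb₂ - βb₁)) * T)) * ∫ p, exp (-β₁ * p.1 - βb₁ * p.2) ∂μ := by
  rw [← integral_const_mul]
  refine integral_mono_ae h₂ (h₁.const_mul _) ?_
  filter_upwards [hsupp] with p ⟨hp₁, hp₂⟩
  rw [← exp_add, exp_le_exp]
  nlinarith

variable (hsupp : ∀ᵐ p ∂μ, T ≤ p.1 ∧ T ≤ p.2)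
  (hint : ∀ β βb : ℝ, 0 < β → 0 < βb →
    Integrable (fun p : ℝ × ℝ => exp (-β * p.1 - βb * p.2)) μ)
include hsupp hint

lemma Ztil_le_of_one_le {s c : ℝ} (hs : 0 < s) (hc : 1 ≤ c) :
    Ztil μ s c ≤ (1 - exp (-s)) * (1 - exp (-c)) + exp (-((c - 1) * T)) * Ztil μ s 1 := by
  have hI := integral_exp_le_exp_mul_integral hsupp le_rfl hc (hint s 1 hs one_pos)
    (hint s c hs (one_pos.trans_le hc))
  rw [sub_self, zero_add] at hI
  have hvac : 0 ≤ (1 - exp (-s)) * (1 - exp (-1)) :=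
    mul_nonneg (sub_nonneg.2 (exp_le_one_iff.2 (by linarith)))
      (sub_nonneg.2 (exp_le_one_iff.2 (by norm_num)))
  unfold Ztil
  nlinarith [exp_pos (-((c - 1) * T))]

lemma tendsto_Ztil_atTop (hT : 0 < T) {x : ℝ} (hx : 0 < x) :
    Tendsto (fun L => Ztil μ L x) atTop (𝓝 (1 - exp (-x))) := by
  have hvac : Tendsto (fun L : ℝ => 1 - exp (-L)) atTop (𝓝 1) := by
    simpa using tendsto_const_nhds.sub (tendsto_exp_atBot.comp tendsto_neg_atTop_atBot)
  have hdecay : Tendsto (fun L : ℝ => exp (-((L - 1) * T))) atTop (𝓝 0) :=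
    tendsto_exp_atBot.comp <| tendsto_neg_atTop_atBot.comp <|
      (tendsto_atTop_add_const_right _ _ tendsto_id).atTop_mul_const hT
  have hI : Tendsto (fun L => ∫ p, exp (-L * p.1 - x * p.2) ∂μ) atTop (𝓝 0) := by
    refine squeeze_zero' (Eventually.of_forall fun L => integral_nonneg fun p => (exp_pos _).le)
      ?_ (by simpa using hdecay.mul_const (∫ p, exp (-1 * p.1 - x * p.2) ∂μ))
    filter_upwards [eventually_ge_atTop 1] with L hL
    simpa using integral_exp_le_exp_mul_integral hsupp hL le_rfl (hint 1 x one_pos hx)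
      (hint L x (one_pos.trans_le hL) hx)
  simpa [Ztil] using (hvac.mul_const (1 - exp (-x))).add hI

lemma crossing_bound {A : ℝ} (hA : 0 ≤ A) (hT : 0 < T)
    (hmod : ∀ β βb : ℝ, 0 < β → 0 < βb →
      Ztil μ β βb = Kker A β βb * Ztil μ (4 * π ^ 2 / β) (4 * π ^ 2 / βb))
    {c : ℝ} (hc : 1 ≤ c) :
    exp (4 * π ^ 2 * A / c - A * c - 4 * π ^ 2 * A + A) / √c * (1 - exp (-(4 * π ^ 2 / c))) ≤
      exp (-((c - 1) * T)) * (1 - exp (-(4 * π ^ 2))) := by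
  set P := 4 * π ^ 2
  set R := exp (P * A / c - A * c - P * A + A) / √c
  have hP : 0 < P := by positivity
  have hc₀ : 0 < c := one_pos.trans_le hc
  have hL : Tendsto (fun s : ℝ => P / s) (𝓝[>] 0) atTop := by
    simpa only [div_eq_mul_inv] using tendsto_inv_nhdsGT_zero.const_mul_atTop hP
  have hbound : ∀ s : ℝ, 0 < s → R * Ztil μ (P / s) (P / c) ≤
      (1 - exp (-s)) * (1 - exp (-c)) / Kker A s 1 + exp (-((c - 1) * T)) * Ztil μ (P / s) P := by
    intro s hs
    have hK := Kker_pos (A := A) hs one_pos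
    rw [div_add' _ _ _ hK.ne', le_div_iff₀ hK]
    calc R * Ztil μ (P / s) (P / c) * Kker A s 1 = Ztil μ s c := by
          rw [hmod s c hs hc₀, Kker_eq_mul_Kker_one A hs hc₀]; ring
      _ ≤ (1 - exp (-s)) * (1 - exp (-c)) + exp (-((c - 1) * T)) * Ztil μ s 1 :=
          Ztil_le_of_one_le hsupp hint hs hc
      _ = _ := by rw [hmod s 1 hs one_pos, div_one]; ring
  have hvac : Tendsto (fun s : ℝ => (1 - exp (-s)) * (1 - exp (-c)) / Kker A s 1)
      (𝓝[>] 0) (𝓝 0) := by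
    have hv : Tendsto (fun s : ℝ => 1 - exp (-s)) (𝓝[>] 0) (𝓝 0) := by
      have : Continuous fun s : ℝ => 1 - exp (-s) := by fun_prop
      simpa using (this.tendsto 0).mono_left nhdsWithin_le_nhds
    have hvc := exp_le_one_iff.2 (neg_nonpos.2 hc₀.le)
    refine squeeze_zero' ?_ ?_ hv
    · filter_upwards [self_mem_nhdsWithin] with s (hs : 0 < s)
      have := exp_le_one_iff.2 (neg_nonpos.2 hs.le)
      exact div_nonneg (by nlinarith) (Kker_pos hs one_pos).le
    · filter_upwards [Ioc_mem_nhdsGT one_pos] with s ⟨hs, hs₁⟩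
      have := exp_le_one_iff.2 (neg_nonpos.2 hs.le)
      calc (1 - exp (-s)) * (1 - exp (-c)) / Kker A s 1 ≤ (1 - exp (-s)) * (1 - exp (-c)) :=
            div_le_self (mul_nonneg (by linarith) (by linarith [exp_pos (-c)]))
              (one_le_Kker_one hA hs hs₁)
        _ ≤ 1 - exp (-s) := mul_le_of_le_one_right (by linarith) (by linarith [exp_pos (-c)])
  have := le_of_tendsto_of_tendsto
    (((tendsto_Ztil_atTop hsupp hint hT (div_pos hP hc₀)).comp hL).const_mul R)
    (hvac.add (((tendsto_Ztil_atTop hsupp hint hT hP).comp hL).const_mul _))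
    (eventually_mem_nhdsWithin.mono hbound)
  simpa using this

end GappedSpectrum

lemma exp_mul_le_of_crossing_bound {A T c : ℝ} (hA : 0 ≤ A) (hc : 1 ≤ c)
    (h : exp (4 * π ^ 2 * A / c - A * c - 4 * π ^ 2 * A + A) / √c * (1 - exp (-(4 * π ^ 2 / c))) ≤
      exp (-((c - 1) * T)) * (1 - exp (-(4 * π ^ 2)))) :
    exp ((T - A) * c) ≤ exp (T - A + 4 * π ^ 2 * A) * c ^ 2 := by
  set P := 4 * π ^ 2
  have hc₀ : 0 < c := one_pos.trans_le hc
  have hv : 0 < 1 - exp (-P) := sub_pos.2 (exp_lt_one_iff.2 (neg_neg_of_pos (by positivity)))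
  have hsqrt : 0 < √c := sqrt_pos.2 hc₀
  have hlow : exp (-(A * c) - P * A + A) / c ^ 2 * (1 - exp (-P)) ≤
      exp (-((c - 1) * T)) * (1 - exp (-P)) :=
    calc exp (-(A * c) - P * A + A) / c ^ 2 * (1 - exp (-P))
        = exp (-(A * c) - P * A + A) / c * ((1 - exp (-P)) / c) := by ring
      _ ≤ exp (P * A / c - A * c - P * A + A) / √c * (1 - exp (-(P / c))) := by
          gcongr
          · have : 0 ≤ P * A / c := by positivity
            linarith
          · exact sqrt_le_self_iff.2 (Or.inr hc)
          · exact one_sub_exp_neg_div_le P hc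
      _ ≤ exp (-((c - 1) * T)) * (1 - exp (-P)) := h
  have hsmall := le_of_mul_le_mul_right hlow hv
  rw [div_le_iff₀ (by positivity)] at hsmall
  calc exp ((T - A) * c) = exp (-(A * c) - P * A + A) * exp (T * c + P * A - A) := by
        rw [← exp_add]; ring_nf
    _ ≤ exp (-((c - 1) * T)) * c ^ 2 * exp (T * c + P * A - A) := by gcongr
    _ = exp (T - A + P * A) * c ^ 2 := by
        rw [mul_right_comm, ← exp_add]; ring_nf

/-- Theorem 3.1(a): in the modular setup, `T ≤ A`, i.e. the twist gap
`τ_gap = 2T` satisfies `τ_gap ≤ (c-1)/12` where `c = 1 + 24A`. -/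
theorem stmt14 (A T : ℝ) (hA : 0 < A) (hT : 0 < T) (μ : Measure (ℝ × ℝ))
    (hsupp : μ {p : ℝ × ℝ | p.1 < T ∨ p.2 < T} = 0)
    (hint : ∀ β βb : ℝ, 0 < β → 0 < βb →
      Integrable (fun p : ℝ × ℝ => Real.exp (-β * p.1 - βb * p.2)) μ)
    (hmod : ∀ β βb : ℝ, 0 < β → 0 < βb →
      Ztil μ β βb = Kker A β βb * Ztil μ (4 * Real.pi ^ 2 / β) (4 * Real.pi ^ 2 / βb)) :
    T ≤ A := by
  have hae : ∀ᵐ p ∂μ, T ≤ p.1 ∧ T ≤ p.2 := by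
    rw [ae_iff]
    simpa only [not_and_or, not_le] using hsupp
  have hgrowth (c : ℝ) (hc : 1 ≤ c) := exp_mul_le_of_crossing_bound hA.le hc
    (crossing_bound hae hint hA.le hT hmod hc)
  linarith [nonpos_of_exp_mul_le_mul_sq hgrowth]
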